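/- arXiv:2107.00809 — 4 statements merged into one kernel-verified Lean document; each statement's English description precedes it below -/
import Mathlib

section
/- Let z ∈ ℝⁿ, α > 0, λ > 0. If ȳ ∈ S^{n-1} minimizes y ↦ (1/(2α))‖y − z‖² + λ‖y‖₁ over the unit sphere S^{n-1}, then ȳᵢ zᵢ ≥ 0 for every coordinate i (i.e., ȳ ⊙ z ≥ 0). -/
theorem minimizer_sign_condition (n : ℕ) (z : Fin n → ℝ) (α lam : ℝ)
    (hα : 0 < α) (hlam : 0 < lam) (ybar : Fin n → ℝ)
    (hsph : (∑ i, (ybar i)^2) = 1)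
    (hmin : ∀ y : Fin n → ℝ, (∑ i, (y i)^2) = 1 →
      (1/(2*α)) * (∑ i, (ybar i - z i)^2) + lam * (∑ i, |ybar i|) ≤
      (1/(2*α)) * (∑ i, (y i - z i)^2) + lam * (∑ i, |y i|)) :
    ∀ i, 0 ≤ ybar i * z i := by
  intro i
  set y : Fin n → ℝ := Function.update ybar i (-(ybar i)) with hy
  have hyj : ∀ j, j ≠ i → y j = ybar j := fun j hj => Function.update_of_ne hj _ _
  have hyi : y i = -(ybar i) := Function.update_self _ _ _
  have hsum : ∀ f : ℝ → ℝ, (∑ j, f (y j)) - (∑ j, f (ybar j)) = f (y i) - f (ybar i) := by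
    intro f
    rw [← Finset.add_sum_erase Finset.univ (fun j => f (y j)) (Finset.mem_univ i),
        ← Finset.add_sum_erase Finset.univ (fun j => f (ybar j)) (Finset.mem_univ i)]
    have : ∀ j ∈ Finset.univ.erase i, f (y j) = f (ybar j) := by
      intro j hj
      rw [hyj j (Finset.ne_of_mem_erase hj)]
    rw [Finset.sum_congr rfl this]
    ring
  have hsq : (∑ j, (y j)^2) = 1 := by
    have h := hsum (fun t => t^2)
    have he : (y i)^2 = (ybar i)^2 := by rw [hyi]; ring
    simp only [he] at h
    linarith [hsph]
  have habs : (∑ j, |y j|) = ∑ j, |ybar j| := by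
    have := hsum (fun t => |t|)
    simp only [hyi, abs_neg] at this
    linarith
  have hkey := hmin y hsq
  rw [habs] at hkey
  have hdiff := hsum (fun t => (t - z i)^2)
  simp only [hyi] at hdiff
  have hsums : (∑ j, (ybar j - z j)^2) ≤ ∑ j, (y j - z j)^2 := by
    have hpos : 0 < 1/(2*α) := by positivity
    nlinarith [hkey]
  have hdiff2 : (∑ j, (y j - z j)^2) - (∑ j, (ybar j - z j)^2) = 4 * (ybar i * z i) := by
    have heq : ∀ j, (y j - z j)^2 - (ybar j - z j)^2 =
        (fun t => (t - z j)^2) (y j) - (fun t => (t - z j)^2) (ybar j) := fun j => rfl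
    have h3 : (∑ j, (y j - z j)^2) - (∑ j, (ybar j - z j)^2)
        = (y i - z i)^2 - (ybar i - z i)^2 := by
      rw [← Finset.add_sum_erase Finset.univ (fun j => (y j - z j)^2) (Finset.mem_univ i),
          ← Finset.add_sum_erase Finset.univ (fun j => (ybar j - z j)^2) (Finset.mem_univ i)]
      have : ∀ j ∈ Finset.univ.erase i, (y j - z j)^2 = (ybar j - z j)^2 := by
        intro j hj
        rw [hyj j (Finset.ne_of_mem_erase hj)]
      rw [Finset.sum_congr rfl this]
      ring
    rw [h3, hyi]
    ring
  linarith
end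

section
/- Global minimizer of the sphere-constrained proximal-ℓ¹ problem: given z ∈ ℝⁿ, α, λ > 0, set wⱼ = λ − (1/α)|zⱼ| and vⱼ = sign(zⱼ) (with vⱼ = 1 if zⱼ = 0). If w ≥ 0, then ȳ = vₜ·eₜ with t = argminⱼ wⱼ minimizes (1/(2α))‖y − z‖² + λ‖y‖₁ over the unit sphere. Otherwise, with w₋ = min(w, 0) componentwise, ȳ = −(w₋/‖w₋‖) ⊙ v is a global minimizer. -/
private lemma expand_sq (n : ℕ) (z y : Fin n → ℝ) :
    (∑ i, (y i - z i)^2)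
      = (∑ i, (y i)^2) + (∑ i, (z i)^2) - 2 * ∑ i, y i * z i := by
  have h : ∀ i, (y i - z i)^2 = (y i)^2 + (z i)^2 - 2 * (y i * z i) := by
    intro i; ring
  simp_rw [h, Finset.sum_sub_distrib, Finset.sum_add_distrib, ← Finset.mul_sum]

private lemma key_to_goal (n : ℕ) (z : Fin n → ℝ) (α lam : ℝ) (hα : 0 < α)
    (yb y : Fin n → ℝ) (hb : (∑ i, (yb i)^2) = 1) (hy : (∑ i, (y i)^2) = 1)
    (key : lam * (∑ i, |yb i|) - (1/α) * (∑ i, yb i * z i)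
        ≤ lam * (∑ i, |y i|) - (1/α) * (∑ i, y i * z i)) :
    (1/(2*α)) * (∑ i, (yb i - z i)^2) + lam * (∑ i, |yb i|) ≤
      (1/(2*α)) * (∑ i, (y i - z i)^2) + lam * (∑ i, |y i|) := by
  rw [expand_sq, expand_sq, hb, hy]
  have h : ∀ x : ℝ, (1/(2*α)) * (1 + (∑ i, (z i)^2) - 2 * x)
      = (1/(2*α)) * (1 + (∑ i, (z i)^2)) - (1/α) * x := by
    intro x; field_simp
  rw [h, h]
  linarith

private lemma lower_bound (n : ℕ) (z : Fin n → ℝ) (α lam : ℝ) (hα : 0 < α)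
    (y : Fin n → ℝ) :
    (∑ i, |y i| * (lam - (1/α) * |z i|))
      ≤ lam * (∑ i, |y i|) - (1/α) * (∑ i, y i * z i) := by
  rw [Finset.mul_sum, Finset.mul_sum, ← Finset.sum_sub_distrib]
  apply Finset.sum_le_sum
  intro i _
  have h1 : y i * z i ≤ |y i| * |z i| := by
    calc y i * z i ≤ |y i * z i| := le_abs_self _
    _ = |y i| * |z i| := abs_mul _ _
  have h2 : (0:ℝ) < 1/α := by positivity
  nlinarith

private lemma sum_abs_ge_one (n : ℕ) (y : Fin n → ℝ) (hy : (∑ i, (y i)^2) = 1) :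
    1 ≤ ∑ i, |y i| := by
  have hle : ∀ i, (y i)^2 ≤ |y i| := by
    intro i
    have h1 : (y i)^2 ≤ 1 := by
      rw [← hy]
      exact Finset.single_le_sum (fun j _ => sq_nonneg (y j)) (Finset.mem_univ i)
    nlinarith [abs_nonneg (y i), sq_abs (y i)]
  calc (1:ℝ) = ∑ i, (y i)^2 := hy.symm
  _ ≤ ∑ i, |y i| := Finset.sum_le_sum (fun i _ => hle i)

theorem global_minimizer_sphere_prox_l1 (n : ℕ) (z : Fin n → ℝ) (α lam : ℝ)
    (hα : 0 < α) (hlam : 0 < lam) :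
    ((∀ j, 0 ≤ lam - (1/α) * |z j|) →
      ∀ t : Fin n, (∀ j, lam - (1/α) * |z t| ≤ lam - (1/α) * |z j|) →
        (∑ i, (Pi.single (M := fun _ : Fin n => ℝ) t
            (if 0 ≤ z t then (1:ℝ) else -1) i)^2) = 1 ∧
        ∀ y : Fin n → ℝ, (∑ i, (y i)^2) = 1 →
          (1/(2*α)) * (∑ i, (Pi.single (M := fun _ : Fin n => ℝ) t
              (if 0 ≤ z t then (1:ℝ) else -1) i - z i)^2)
            + lam * (∑ i, |Pi.single (M := fun _ : Fin n => ℝ) t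
              (if 0 ≤ z t then (1:ℝ) else -1) i|) ≤
          (1/(2*α)) * (∑ i, (y i - z i)^2) + lam * (∑ i, |y i|)) ∧
    ((∃ l, lam - (1/α) * |z l| < 0) →
      (∑ i, ((fun j => -(min (lam - (1/α) * |z j|) 0)
          / Real.sqrt (∑ k, (min (lam - (1/α) * |z k|) 0)^2)
          * (if 0 ≤ z j then (1:ℝ) else -1)) i)^2) = 1 ∧
      ∀ y : Fin n → ℝ, (∑ i, (y i)^2) = 1 →
        (1/(2*α)) * (∑ i, ((fun j => -(min (lam - (1/α) * |z j|) 0)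
            / Real.sqrt (∑ k, (min (lam - (1/α) * |z k|) 0)^2)
            * (if 0 ≤ z j then (1:ℝ) else -1)) i - z i)^2)
          + lam * (∑ i, |(fun j => -(min (lam - (1/α) * |z j|) 0)
            / Real.sqrt (∑ k, (min (lam - (1/α) * |z k|) 0)^2)
            * (if 0 ≤ z j then (1:ℝ) else -1)) i|) ≤
        (1/(2*α)) * (∑ i, (y i - z i)^2) + lam * (∑ i, |y i|)) := by
  set w : Fin n → ℝ := fun j => lam - (1/α) * |z j| with hw
  set v : Fin n → ℝ := fun j => if 0 ≤ z j then (1:ℝ) else -1 with hv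
  have hv2 : ∀ j, (v j)^2 = 1 := by
    intro j; simp only [hv]; split <;> norm_num
  have hvabs : ∀ j, |v j| = 1 := by
    intro j; simp only [hv]; split <;> norm_num
  have hvz : ∀ j, v j * z j = |z j| := by
    intro j; simp only [hv]; split
    · rw [one_mul, abs_of_nonneg ‹_›]
    · push_neg at *; rw [neg_one_mul, abs_of_neg (by linarith)]
  constructor
  · -- case w ≥ 0
    intro hwpos t ht
    have hb : (∑ i, (Pi.single (M := fun _ : Fin n => ℝ) t (v t) i)^2) = 1 := by
      rw [Finset.sum_eq_single t]
      · rw [Pi.single_eq_same]; exact hv2 t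
      · intro j _ hj; rw [Pi.single_eq_of_ne hj]; ring
      · intro h; exact absurd (Finset.mem_univ t) h
    refine ⟨hb, ?_⟩
    intro y hy
    have sabs : (∑ i, |Pi.single (M := fun _ : Fin n => ℝ) t (v t) i|) = 1 := by
      rw [Finset.sum_eq_single t]
      · rw [Pi.single_eq_same]; exact hvabs t
      · intro j _ hj; rw [Pi.single_eq_of_ne hj]; simp
      · intro h; exact absurd (Finset.mem_univ t) h
    have sz : (∑ i, Pi.single (M := fun _ : Fin n => ℝ) t (v t) i * z i) = |z t| := by
      rw [Finset.sum_eq_single t]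
      · rw [Pi.single_eq_same]; exact hvz t
      · intro j _ hj; rw [Pi.single_eq_of_ne hj]; ring
      · intro h; exact absurd (Finset.mem_univ t) h
    have key : lam * (∑ i, |Pi.single (M := fun _ : Fin n => ℝ) t (v t) i|)
        - (1/α) * (∑ i, Pi.single (M := fun _ : Fin n => ℝ) t (v t) i * z i)
        ≤ lam * (∑ i, |y i|) - (1/α) * (∑ i, y i * z i) := by
      rw [sabs, sz, mul_one]
      have h1 := lower_bound n z α lam hα y
      have h2 : (lam - (1/α) * |z t|) * (∑ i, |y i|) ≤ ∑ i, |y i| * w i := by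
        rw [Finset.mul_sum]
        apply Finset.sum_le_sum
        intro i _
        rw [mul_comm]
        exact mul_le_mul_of_nonneg_left (ht i) (abs_nonneg _)
      have h3 : lam - (1/α) * |z t| ≤ (lam - (1/α) * |z t|) * (∑ i, |y i|) := by
        nlinarith [sum_abs_ge_one n y hy, hwpos t]
      have h4 : (∑ i, |y i| * w i) ≤ lam * (∑ i, |y i|) - (1/α) * (∑ i, y i * z i) := h1
      linarith
    exact key_to_goal n z α lam hα _ y hb hy key
  · -- case some w < 0
    rintro ⟨l, hl⟩
    set u : Fin n → ℝ := fun j => -(min (w j) 0) with hu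
    have hune : ∀ j, 0 ≤ u j := fun j => neg_nonneg.mpr (min_le_right _ _)
    have huw : ∀ j, u j * w j = -(u j)^2 := by
      intro j; simp only [hu]
      rcases le_or_gt (w j) 0 with h | h
      · rw [min_eq_left h]; ring
      · rw [min_eq_right h.le]; ring
    set s : ℝ := Real.sqrt (∑ k, (min (w k) 0)^2) with hs
    have hsq : s^2 = ∑ k, (u k)^2 := by
      rw [hs, Real.sq_sqrt (Finset.sum_nonneg fun k _ => sq_nonneg _)]
      apply Finset.sum_congr rfl
      intro k _; simp only [hu]; ring
    have hspos : 0 < s := by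
      rw [hs]
      apply Real.sqrt_pos.mpr
      apply Finset.sum_pos' (fun k _ => sq_nonneg _)
      refine ⟨l, Finset.mem_univ l, ?_⟩
      have hl' : w l < 0 := hl
      rw [min_eq_left hl'.le]
      nlinarith
    have hnorm : (∑ i, (u i / s * v i)^2) = 1 := by
      have h : ∀ i, (u i / s * v i)^2 = (u i)^2 / s^2 := by
        intro i; rw [mul_pow, hv2, mul_one, div_pow]
      simp_rw [h]
      rw [← Finset.sum_div, ← hsq, div_self (by positivity)]
    refine ⟨hnorm, ?_⟩
    intro y hy
    have key : lam * (∑ i, |u i / s * v i|) - (1/α) * (∑ i, u i / s * v i * z i)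
        ≤ lam * (∑ i, |y i|) - (1/α) * (∑ i, y i * z i) := by
      have hL : lam * (∑ i, |u i / s * v i|) - (1/α) * (∑ i, u i / s * v i * z i)
          = -s := by
        have e1 : ∀ i, |u i / s * v i| = u i / s := by
          intro i
          rw [abs_mul, hvabs, mul_one, abs_of_nonneg (div_nonneg (hune i) hspos.le)]
        have e2 : ∀ i, u i / s * v i * z i = u i / s * |z i| := by
          intro i; rw [mul_assoc, hvz]
        simp_rw [e1, e2]
        have h : ∀ i, lam * (u i / s) - (1/α) * (u i / s * |z i|)
            = (u i * w i) / s := by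
          intro i; simp only [hw]; field_simp
        rw [Finset.mul_sum, Finset.mul_sum, ← Finset.sum_sub_distrib]
        simp_rw [h, huw]
        rw [← Finset.sum_div]
        rw [show (∑ i, -(u i)^2) = -(s^2) by rw [hsq]; exact Finset.sum_neg_distrib _]
        field_simp
      rw [hL]
      have h1 := lower_bound n z α lam hα y
      have h2 : -s ≤ ∑ i, |y i| * w i := by
        have hcs := Finset.sum_mul_sq_le_sq_mul_sq Finset.univ (fun i => |y i|) u
        simp_rw [sq_abs] at hcs
        rw [hy, one_mul, ← hsq] at hcs
        have hnn : 0 ≤ ∑ i, |y i| * u i :=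
          Finset.sum_nonneg fun i _ => mul_nonneg (abs_nonneg _) (hune i)
        have h4 : ∑ i, |y i| * u i ≤ s := by nlinarith
        have h5 : ∀ i, -(|y i| * u i) ≤ |y i| * w i := by
          intro i
          have h6 : |y i| * min (w i) 0 ≤ |y i| * w i :=
            mul_le_mul_of_nonneg_left (min_le_left _ _) (abs_nonneg _)
          have h7 : u i = -(min (w i) 0) := rfl
          have h8 : -(|y i| * u i) = |y i| * (min (w i) 0) := by rw [h7]; ring
          linarith
        calc -s ≤ -(∑ i, |y i| * u i) := by linarith
        _ = ∑ i, -(|y i| * u i) := (Finset.sum_neg_distrib _).symm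
        _ ≤ ∑ i, |y i| * w i := Finset.sum_le_sum fun i _ => h5 i
      linarith
    exact key_to_goal n z α lam hα _ y hnorm hy key
end

section
/- Sufficient decrease: suppose y, ȳ are unit vectors in ℝⁿ, λ' ≤ λ (positive reals), α ≤ 1/(L_f + γ) with γ > 0, where L_f is a Lipschitz constant for ∇f on the closed unit ball, and ȳ minimizes w ↦ f(y) + ⟨w − y, ∇f(y)⟩ + (1/(2α))‖w − y‖² + λ'‖w‖₁ over the unit sphere. Then f(y) + λ‖y‖₁ − (f(ȳ) + λ'‖ȳ‖₁) ≥ (γ/2)‖ȳ − y‖². -/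
open intervalIntegral in
lemma descent_aux {n : ℕ} (f : EuclideanSpace ℝ (Fin n) → ℝ)
    (gradf : EuclideanSpace ℝ (Fin n) → EuclideanSpace ℝ (Fin n))
    (hgrad : ∀ y, HasGradientAt f (gradf y) y)
    (L : ℝ) (hL : 0 ≤ L)
    (hLip : ∀ y₁ y₂ : EuclideanSpace ℝ (Fin n), ‖y₁‖ ≤ 1 → ‖y₂‖ ≤ 1 →
      ‖gradf y₁ - gradf y₂‖ ≤ L * ‖y₁ - y₂‖)
    (y z : EuclideanSpace ℝ (Fin n)) (hy : ‖y‖ ≤ 1) (hz : ‖z‖ ≤ 1) :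
    f z ≤ f y + inner (𝕜 := ℝ) (z - y) (gradf y) + L/2 * ‖z - y‖^2 := by
  set d := z - y with hd
  -- line stays in unit ball
  have hline : ∀ t ∈ Set.Icc (0:ℝ) 1, ‖y + t • d‖ ≤ 1 := by
    intro t ht
    have : y + t • d = (1 - t) • y + t • z := by
      rw [hd]; module
    rw [this]
    calc ‖(1 - t) • y + t • z‖ ≤ ‖(1-t) • y‖ + ‖t • z‖ := norm_add_le _ _
    _ = (1-t) * ‖y‖ + t * ‖z‖ := by
        rw [norm_smul, norm_smul, Real.norm_eq_abs, Real.norm_eq_abs,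
          abs_of_nonneg (by linarith [ht.1, ht.2]), abs_of_nonneg ht.1]
    _ ≤ (1-t) * 1 + t * 1 := by
        have h1 := ht.1; have h2 := ht.2
        have h3 : (0:ℝ) ≤ 1 - t := by linarith
        gcongr
    _ = 1 := by ring
  have hφ : ∀ t : ℝ, HasDerivAt (fun t : ℝ => f (y + t • d))
      (inner (𝕜 := ℝ) (gradf (y + t • d)) d) t := by
    intro t
    have hc : HasDerivAt (fun t : ℝ => y + t • d) d t := by
      simpa using ((hasDerivAt_id t).smul_const d).const_add y
    have := ((hgrad (y + t • d)).hasFDerivAt).comp_hasDerivAt t hc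
    simp at this; exact this
  set ψ : ℝ → ℝ := fun t => inner (𝕜 := ℝ) (gradf (y + t • d) - gradf y) d with hψ
  have hψ' : ∀ t : ℝ, HasDerivAt
      (fun t : ℝ => f (y + t • d) - t * inner (𝕜 := ℝ) (gradf y) d) (ψ t) t := by
    intro t
    have := (hφ t).sub ((hasDerivAt_id t).mul_const (inner (𝕜 := ℝ) (gradf y) d))
    simp [hψ, inner_sub_left] at this ⊢; exact this
  -- continuity of gradf on the ball
  have hcont : ContinuousOn gradf (Metric.closedBall (0 : EuclideanSpace ℝ (Fin n)) 1) := by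
    apply LipschitzOnWith.continuousOn (K := L.toNNReal)
    intro a ha b hb
    rw [edist_dist, edist_dist]
    have h1 : ‖a‖ ≤ 1 := by simpa using Metric.mem_closedBall.1 ha
    have h2 : ‖b‖ ≤ 1 := by simpa using Metric.mem_closedBall.1 hb
    have := hLip a b h1 h2
    rw [← ENNReal.ofReal_coe_nnreal]
    rw [← ENNReal.ofReal_mul (by positivity)]
    apply ENNReal.ofReal_le_ofReal
    simp only [Real.coe_toNNReal', dist_eq_norm]
    calc ‖gradf a - gradf b‖ ≤ L * ‖a - b‖ := this
    _ ≤ max L 0 * ‖a - b‖ := by gcongr; exact le_max_left _ _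
  have hψcont : ContinuousOn ψ (Set.Icc (0:ℝ) 1) := by
    apply ContinuousOn.inner
    · apply ContinuousOn.sub
      · apply hcont.comp (by fun_prop)
        intro t ht
        simpa using hline t ht
      · exact continuousOn_const
    · exact continuousOn_const
  have hψcont' : ContinuousOn ψ (Set.uIcc (0:ℝ) 1) := by
    rw [Set.uIcc_of_le zero_le_one]; exact hψcont
  have hψint : IntervalIntegrable ψ MeasureTheory.volume 0 1 :=
    hψcont'.intervalIntegrable
  have hftc : ∫ t in (0:ℝ)..1, ψ t =
      (f (y + (1:ℝ) • d) - 1 * inner (𝕜 := ℝ) (gradf y) d) -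
      (f (y + (0:ℝ) • d) - 0 * inner (𝕜 := ℝ) (gradf y) d) := by
    exact intervalIntegral.integral_eq_sub_of_hasDerivAt (fun t _ => hψ' t) hψint
  have hbound : ∀ t ∈ Set.Icc (0:ℝ) 1, ψ t ≤ L * ‖d‖^2 * t := by
    intro t ht
    calc ψ t ≤ ‖gradf (y + t • d) - gradf y‖ * ‖d‖ := real_inner_le_norm _ _
    _ ≤ (L * ‖(y + t • d) - y‖) * ‖d‖ := by
        gcongr; exact hLip _ _ (hline t ht) hy
    _ = L * ‖d‖^2 * t := by
        have : (y + t • d) - y = t • d := by abel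
        rw [this, norm_smul, Real.norm_eq_abs, abs_of_nonneg ht.1]; ring
  have hint2 : ∫ t in (0:ℝ)..1, L * ‖d‖^2 * t = L * ‖d‖^2 / 2 := by
    rw [intervalIntegral.integral_const_mul, integral_id]; ring
  have hmono : ∫ t in (0:ℝ)..1, ψ t ≤ ∫ t in (0:ℝ)..1, L * ‖d‖^2 * t := by
    apply intervalIntegral.integral_mono_on zero_le_one hψint
    · exact ((continuous_const.mul continuous_id).intervalIntegrable 0 1)
    · exact hbound
  have h1 : y + (1:ℝ) • d = z := by rw [hd]; module
  have h0 : y + (0:ℝ) • d = y := by simp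
  rw [h1, h0] at hftc
  have : f z - inner (𝕜 := ℝ) (gradf y) d - f y ≤ L * ‖d‖^2 / 2 := by
    rw [← hint2]
    calc f z - inner (𝕜 := ℝ) (gradf y) d - f y = ∫ t in (0:ℝ)..1, ψ t := by
          rw [hftc]; ring
    _ ≤ _ := hmono
  have hsym : inner (𝕜 := ℝ) (gradf y) d = inner (𝕜 := ℝ) d (gradf y) := real_inner_comm _ _
  rw [hsym] at this
  linarith

theorem sufficient_decrease (n : ℕ) (f : EuclideanSpace ℝ (Fin n) → ℝ)
    (gradf : EuclideanSpace ℝ (Fin n) → EuclideanSpace ℝ (Fin n))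
    (hgrad : ∀ y, HasGradientAt f (gradf y) y)
    (L γ α lam lam' : ℝ) (hL : 0 ≤ L) (hγ : 0 < γ)
    (hLip : ∀ y₁ y₂ : EuclideanSpace ℝ (Fin n), ‖y₁‖ ≤ 1 → ‖y₂‖ ≤ 1 →
      ‖gradf y₁ - gradf y₂‖ ≤ L * ‖y₁ - y₂‖)
    (hα : 0 < α) (hαle : α ≤ 1 / (L + γ))
    (hlam' : 0 < lam') (hlam : lam' ≤ lam)
    (y ybar : EuclideanSpace ℝ (Fin n)) (hy : ‖y‖ = 1) (hybar : ‖ybar‖ = 1)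
    (hmin : ∀ w : EuclideanSpace ℝ (Fin n), ‖w‖ = 1 →
      f y + inner (𝕜 := ℝ) (ybar - y) (gradf y) + (1/(2*α)) * ‖ybar - y‖^2
        + lam' * (∑ i, |ybar i|) ≤
      f y + inner (𝕜 := ℝ) (w - y) (gradf y) + (1/(2*α)) * ‖w - y‖^2
        + lam' * (∑ i, |w i|)) :
    (γ/2) * ‖ybar - y‖^2 ≤
      (f y + lam * (∑ i, |y i|)) - (f ybar + lam' * (∑ i, |ybar i|)) := by
  have hkey := hmin y hy
  simp only [sub_self, inner_zero_left, norm_zero] at hkey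
  -- hkey : inner (ybar-y) (gradf y) + (1/(2α))‖ybar-y‖² + lam'∑|ybar| ≤ lam'∑|y|
  have hdesc := descent_aux f gradf hgrad L hL hLip y ybar hy.le hybar.le
  have hαinv : L + γ ≤ 1/α := by
    rw [le_div_iff₀ hα]
    have hLγ : 0 < L + γ := by linarith
    calc (L + γ) * α ≤ (L + γ) * (1/(L+γ)) := by gcongr
    _ = 1 := by field_simp
  have hsum : (0:ℝ) ≤ ∑ i, |y i| := Finset.sum_nonneg fun i _ => abs_nonneg _
  have hlamsum : lam' * (∑ i, |y i|) ≤ lam * (∑ i, |y i|) := by gcongr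
  have hnorm : (0:ℝ) ≤ ‖ybar - y‖^2 := sq_nonneg _
  have h2α : 1/(2*α) = (1/α)/2 := by ring
  nlinarith [mul_le_mul_of_nonneg_right hαinv hnorm]
end

section
/- Cauchy from telescoping bound: let (y^k) be a sequence in ℝⁿ and (ξ_k) a nonincreasing nonnegative sequence with ξ_k → 0. If there is K such that for all k ≥ ℓ ≥ K, Σ_{j=ℓ+1}^{k} ‖y^{j+1} − y^j‖ ≤ ‖y^{ℓ+1} − y^ℓ‖ + ξ_{ℓ+1}, and ‖y^{k+1} − y^k‖ → 0, then Σ_{k} ‖y^{k+1} − y^k‖ < ∞ and (y^k) is a Cauchy sequence, hence convergent. -/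
theorem cauchy_from_telescoping (n : ℕ) (y : ℕ → EuclideanSpace ℝ (Fin n))
    (ξ : ℕ → ℝ) (hξmono : Antitone ξ) (hξnn : ∀ k, 0 ≤ ξ k)
    (hξ0 : Filter.Tendsto ξ Filter.atTop (nhds 0))
    (K : ℕ)
    (hsum : ∀ k l : ℕ, K ≤ l → l ≤ k →
      (∑ j ∈ Finset.Icc (l+1) k, ‖y (j+1) - y j‖) ≤ ‖y (l+1) - y l‖ + ξ (l+1))
    (hdiff : Filter.Tendsto (fun k => ‖y (k+1) - y k‖) Filter.atTop (nhds 0)) :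
    Summable (fun k => ‖y (k+1) - y k‖) ∧ CauchySeq y ∧
      ∃ ystar, Filter.Tendsto y Filter.atTop (nhds ystar) := by
  set f : ℕ → ℝ := fun k => ‖y (k+1) - y k‖ with hf
  have hfnn : ∀ k, 0 ≤ f k := fun k => norm_nonneg _
  set C : ℝ := (∑ i ∈ Finset.range (K+1), f i) + (f K + ξ (K+1)) with hC
  have key : ∀ m, K ≤ m → (∑ i ∈ Finset.range (m+1), f i) ≤ C := by
    intro m hm
    have hsplit : (∑ i ∈ Finset.Ico 0 (K+1), f i) + (∑ i ∈ Finset.Ico (K+1) (m+1), f i)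
        = ∑ i ∈ Finset.Ico 0 (m+1), f i :=
      Finset.sum_Ico_consecutive f (Nat.zero_le _) (by omega)
    have hIcc : (∑ i ∈ Finset.Ico (K+1) (m+1), f i) = ∑ i ∈ Finset.Icc (K+1) m, f i := by
      rw [Finset.Ico_add_one_right_eq_Icc]
    have h2 : (∑ i ∈ Finset.Icc (K+1) m, f i) ≤ f K + ξ (K+1) := hsum m K le_rfl hm
    have : (∑ i ∈ Finset.range (m+1), f i)
        = (∑ i ∈ Finset.range (K+1), f i) + (∑ i ∈ Finset.Icc (K+1) m, f i) := by
      simp only [Finset.range_eq_Ico]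
      rw [← hsplit, hIcc]
    rw [this]
    exact add_le_add_right h2 _
  have hbound : ∀ N, (∑ i ∈ Finset.range N, f i) ≤ C := by
    intro N
    have hmono : (∑ i ∈ Finset.range N, f i) ≤ ∑ i ∈ Finset.range (max N (K+1)), f i :=
      Finset.sum_le_sum_of_subset_of_nonneg
        (Finset.range_subset_range.mpr (le_max_left _ _)) (fun i _ _ => hfnn i)
    have : max N (K+1) = (max N (K+1) - 1) + 1 := by omega
    calc (∑ i ∈ Finset.range N, f i) ≤ ∑ i ∈ Finset.range (max N (K+1)), f i := hmono
      _ ≤ C := by rw [this]; exact key _ (by omega)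
  have hsummable : Summable f := summable_of_sum_range_le hfnn hbound
  refine ⟨hsummable, ?_, ?_⟩
  · have : Summable (fun k => dist (y k) (y (k+1))) := by
      rw [hf] at hsummable
      simpa [dist_eq_norm, norm_sub_rev] using hsummable
    exact cauchySeq_of_summable_dist this
  · have hc : CauchySeq y := by
      have : Summable (fun k => dist (y k) (y (k+1))) := by
        rw [hf] at hsummable
        simpa [dist_eq_norm, norm_sub_rev] using hsummable
      exact cauchySeq_of_summable_dist this
    exact cauchySeq_tendsto_of_complete hc
end
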